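/- Let A, B and C be finite-dimensional k-algebras with A ≤_J B. Then A ⊗_k C ≤_J B ⊗_k C and C ⊗_k A ≤_J C ⊗_k B, where ⊗_k denotes the tensor product of k-algebras. In particular, if A ∼_J B then A ⊗_k C ∼_J B ⊗_k C. -/

import Mathlib

set_option linter.unusedSectionVars false

open scoped TensorProduct
open MulOpposite

universe u

namespace JJ

noncomputable section

section BalTensor

variable (B : Type u) [Ring B] (M : Type u) [AddCommGroup M] [Module Bᵐᵒᵖ M]
  (N : Type u) [AddCommGroup N] [Module B N]

/-- The subgroup of relations defining the balanced tensor product `M ⊗_B N`. -/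
def balRel : Submodule ℤ (TensorProduct ℤ M N) :=
  Submodule.span ℤ { z | ∃ (b : B) (m : M) (n : N),
    z = (op b • m) ⊗ₜ[ℤ] n - m ⊗ₜ[ℤ] (b • n) }

/-- The balanced tensor product `M ⊗_B N` of a right `B`-module `M` and a left `B`-module `N`. -/
def BalTensor : Type u := TensorProduct ℤ M N ⧸ balRel B M N

instance : AddCommGroup (BalTensor B M N) :=
  inferInstanceAs (AddCommGroup (TensorProduct ℤ M N ⧸ balRel B M N))

/-- The canonical projection onto the balanced tensor product. -/
def BalTensor.mk : TensorProduct ℤ M N →+ BalTensor B M N :=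
  (balRel B M N).mkQ.toAddMonoidHom

/-- The image of a pure tensor in the balanced tensor product. -/
def BalTensor.tmul (m : M) (n : N) : BalTensor B M N := BalTensor.mk B M N (m ⊗ₜ n)

lemma BalTensor.mk_surjective : Function.Surjective (BalTensor.mk B M N) :=
  Submodule.mkQ_surjective _

lemma BalTensor.balance (b : B) (m : M) (n : N) :
    BalTensor.tmul B M N (op b • m) n = BalTensor.tmul B M N m (b • n) := by
  have h : ((op b • m) ⊗ₜ[ℤ] n - m ⊗ₜ[ℤ] (b • n)) ∈ balRel B M N :=
    Submodule.subset_span ⟨b, m, n, rfl⟩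
  have h2 := (Submodule.Quotient.mk_eq_zero (balRel B M N)).2 h
  rw [Submodule.Quotient.mk_sub] at h2
  exact sub_eq_zero.1 h2

end BalTensor

section LeftAction

variable (B : Type u) [Ring B] (M : Type u) [AddCommGroup M] [Module Bᵐᵒᵖ M]
  (N : Type u) [AddCommGroup N] [Module B N]
  (A : Type u) [Ring A] [Module A M] [SMulCommClass A Bᵐᵒᵖ M]

/-- The left action of `a : A` on the plain tensor product. -/
def lActAux (a : A) : TensorProduct ℤ M N →ₗ[ℤ] TensorProduct ℤ M N :=
  LinearMap.rTensor N (DistribMulAction.toAddMonoidHom M a).toIntLinearMap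

lemma lActAux_tmul (a : A) (m : M) (n : N) :
    lActAux M N A a (m ⊗ₜ n) = (a • m) ⊗ₜ n := by
  exact LinearMap.rTensor_tmul _ _ _ _

lemma lActAux_rel (a : A) :
    balRel B M N ≤ (balRel B M N).comap (lActAux M N A a) := by
  rw [balRel, Submodule.span_le]
  rintro z ⟨b, m, n, rfl⟩
  simp only [SetLike.mem_coe, Submodule.mem_comap, map_sub, lActAux_tmul]
  rw [smul_comm a (op b) m]
  exact Submodule.subset_span ⟨b, a • m, n, rfl⟩

/-- The left action of `A` on the balanced tensor product. -/
def lAct (a : A) : BalTensor B M N →ₗ[ℤ] BalTensor B M N :=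
  Submodule.mapQ _ _ (lActAux M N A a) (lActAux_rel B M N A a)

instance : SMul A (BalTensor B M N) := ⟨fun a x => lAct B M N A a x⟩

lemma BalTensor.lsmul_mk (a : A) (x : TensorProduct ℤ M N) :
    a • (BalTensor.mk B M N x) = BalTensor.mk B M N (lActAux M N A a x) := rfl

lemma BalTensor.lsmul_tmul (a : A) (m : M) (n : N) :
    a • (BalTensor.tmul B M N m n) = BalTensor.tmul B M N (a • m) n := by
  rw [BalTensor.tmul, BalTensor.lsmul_mk, lActAux_tmul]
  rfl

instance BalTensor.instLeftModule : Module A (BalTensor B M N) where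
  one_smul x := by
    obtain ⟨y, rfl⟩ := BalTensor.mk_surjective B M N x
    rw [BalTensor.lsmul_mk]
    congr 1
    have h : lActAux M N A (1 : A) = LinearMap.id :=
      TensorProduct.ext' fun m n =>
        (lActAux_tmul M N A 1 m n).trans (congrArg (fun x : M => x ⊗ₜ[ℤ] n) (one_smul A m))
    rw [h]; rfl
  mul_smul a b x := by
    obtain ⟨y, rfl⟩ := BalTensor.mk_surjective B M N x
    rw [BalTensor.lsmul_mk, BalTensor.lsmul_mk, BalTensor.lsmul_mk]
    congr 1
    have h : lActAux M N A (a * b) = (lActAux M N A a).comp (lActAux M N A b) :=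
      TensorProduct.ext' fun m n => by
        exact (lActAux_tmul M N A (a * b) m n).trans
          ((congrArg (fun x : M => x ⊗ₜ[ℤ] n) (mul_smul a b m)).trans
            ((lActAux_tmul M N A a (b • m) n).symm.trans
              (congrArg (fun x => lActAux M N A a x) (lActAux_tmul M N A b m n).symm)))
    rw [h]; rfl
  smul_zero a := map_zero (lAct B M N A a)
  smul_add a x y := map_add (lAct B M N A a) x y
  add_smul a b x := by
    obtain ⟨y, rfl⟩ := BalTensor.mk_surjective B M N x
    rw [BalTensor.lsmul_mk, BalTensor.lsmul_mk, BalTensor.lsmul_mk, ← map_add]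
    congr 1
    have h : lActAux M N A (a + b) = lActAux M N A a + lActAux M N A b :=
      TensorProduct.ext' fun m n => by
        exact (lActAux_tmul M N A (a + b) m n).trans
          ((congrArg (fun x : M => x ⊗ₜ[ℤ] n) (add_smul a b m)).trans
            ((TensorProduct.add_tmul ..).trans
              (congrArg₂ (· + ·) (lActAux_tmul M N A a m n).symm (lActAux_tmul M N A b m n).symm)))
    rw [h]; rfl
  zero_smul x := by
    obtain ⟨y, rfl⟩ := BalTensor.mk_surjective B M N x
    rw [BalTensor.lsmul_mk]
    have h : lActAux M N A (0 : A) = 0 :=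
      TensorProduct.ext' fun m n => by
        exact (lActAux_tmul M N A 0 m n).trans
          ((congrArg (fun x : M => x ⊗ₜ[ℤ] n) (zero_smul A m)).trans (TensorProduct.zero_tmul ..))
    rw [h]
    simp

end LeftAction

section RightAction

variable (B : Type u) [Ring B] (M : Type u) [AddCommGroup M] [Module Bᵐᵒᵖ M]
  (N : Type u) [AddCommGroup N] [Module B N]
  (C : Type u) [Ring C] [Module Cᵐᵒᵖ N] [SMulCommClass B Cᵐᵒᵖ N]

/-- The right action of `c : Cᵐᵒᵖ` on the plain tensor product. -/
def rActAux (c : Cᵐᵒᵖ) : TensorProduct ℤ M N →ₗ[ℤ] TensorProduct ℤ M N :=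
  LinearMap.lTensor M (DistribMulAction.toAddMonoidHom N c).toIntLinearMap

lemma rActAux_tmul (c : Cᵐᵒᵖ) (m : M) (n : N) :
    rActAux M N C c (m ⊗ₜ n) = m ⊗ₜ (c • n) := by
  exact LinearMap.lTensor_tmul _ _ _ _

lemma rActAux_rel (c : Cᵐᵒᵖ) :
    balRel B M N ≤ (balRel B M N).comap (rActAux M N C c) := by
  rw [balRel, Submodule.span_le]
  rintro z ⟨b, m, n, rfl⟩
  simp only [SetLike.mem_coe, Submodule.mem_comap, map_sub, rActAux_tmul]
  rw [← smul_comm b c n]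
  exact Submodule.subset_span ⟨b, m, c • n, rfl⟩

/-- The right action of `Cᵐᵒᵖ` on the balanced tensor product. -/
def rAct (c : Cᵐᵒᵖ) : BalTensor B M N →ₗ[ℤ] BalTensor B M N :=
  Submodule.mapQ _ _ (rActAux M N C c) (rActAux_rel B M N C c)

instance : SMul Cᵐᵒᵖ (BalTensor B M N) := ⟨fun c x => rAct B M N C c x⟩

lemma BalTensor.rsmul_mk (c : Cᵐᵒᵖ) (x : TensorProduct ℤ M N) :
    c • (BalTensor.mk B M N x) = BalTensor.mk B M N (rActAux M N C c x) := rfl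

lemma BalTensor.rsmul_tmul (c : Cᵐᵒᵖ) (m : M) (n : N) :
    c • (BalTensor.tmul B M N m n) = BalTensor.tmul B M N m (c • n) := by
  rw [BalTensor.tmul, BalTensor.rsmul_mk, rActAux_tmul]
  rfl

instance BalTensor.instRightModule : Module Cᵐᵒᵖ (BalTensor B M N) where
  one_smul x := by
    obtain ⟨y, rfl⟩ := BalTensor.mk_surjective B M N x
    rw [BalTensor.rsmul_mk]
    congr 1
    have h : rActAux M N C (1 : Cᵐᵒᵖ) = LinearMap.id :=
      TensorProduct.ext' fun m n =>
        (rActAux_tmul M N C 1 m n).trans (congrArg (fun x : N => m ⊗ₜ[ℤ] x) (one_smul Cᵐᵒᵖ n))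
    rw [h]; rfl
  mul_smul a b x := by
    obtain ⟨y, rfl⟩ := BalTensor.mk_surjective B M N x
    rw [BalTensor.rsmul_mk, BalTensor.rsmul_mk, BalTensor.rsmul_mk]
    congr 1
    have h : rActAux M N C (a * b) = (rActAux M N C a).comp (rActAux M N C b) :=
      TensorProduct.ext' fun m n => by
        exact (rActAux_tmul M N C (a * b) m n).trans
          ((congrArg (fun x : N => m ⊗ₜ[ℤ] x) (mul_smul a b n)).trans
            ((rActAux_tmul M N C a m (b • n)).symm.trans
              (congrArg (fun x => rActAux M N C a x) (rActAux_tmul M N C b m n).symm)))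
    rw [h]; rfl
  smul_zero c := map_zero (rAct B M N C c)
  smul_add c x y := map_add (rAct B M N C c) x y
  add_smul a b x := by
    obtain ⟨y, rfl⟩ := BalTensor.mk_surjective B M N x
    rw [BalTensor.rsmul_mk, BalTensor.rsmul_mk, BalTensor.rsmul_mk, ← map_add]
    congr 1
    have h : rActAux M N C (a + b) = rActAux M N C a + rActAux M N C b :=
      TensorProduct.ext' fun m n => by
        exact (rActAux_tmul M N C (a + b) m n).trans
          ((congrArg (fun x : N => m ⊗ₜ[ℤ] x) (add_smul a b n)).trans
            ((TensorProduct.tmul_add ..).trans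
              (congrArg₂ (· + ·) (rActAux_tmul M N C a m n).symm (rActAux_tmul M N C b m n).symm)))
    rw [h]; rfl
  zero_smul x := by
    obtain ⟨y, rfl⟩ := BalTensor.mk_surjective B M N x
    rw [BalTensor.rsmul_mk]
    have h : rActAux M N C (0 : Cᵐᵒᵖ) = 0 :=
      TensorProduct.ext' fun m n => by
        exact (rActAux_tmul M N C 0 m n).trans
          ((congrArg (fun x : N => m ⊗ₜ[ℤ] x) (zero_smul Cᵐᵒᵖ n)).trans (TensorProduct.tmul_zero ..))
    rw [h]
    simp

end RightAction

section Comm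

variable (B : Type u) [Ring B] (M : Type u) [AddCommGroup M] [Module Bᵐᵒᵖ M]
  (N : Type u) [AddCommGroup N] [Module B N]
  (A : Type u) [Ring A] [Module A M] [SMulCommClass A Bᵐᵒᵖ M]
  (C : Type u) [Ring C] [Module Cᵐᵒᵖ N] [SMulCommClass B Cᵐᵒᵖ N]

instance BalTensor.instSMulCommClass : SMulCommClass A Cᵐᵒᵖ (BalTensor B M N) := by
  constructor
  intro a c x
  obtain ⟨y, rfl⟩ := BalTensor.mk_surjective B M N x
  rw [BalTensor.rsmul_mk, BalTensor.lsmul_mk, BalTensor.lsmul_mk, BalTensor.rsmul_mk]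
  congr 1
  have h : (lActAux M N A a).comp (rActAux M N C c)
      = (rActAux M N C c).comp (lActAux M N A a) :=
    TensorProduct.ext' fun m n => by
      exact ((congrArg (fun x => lActAux M N A a x) (rActAux_tmul M N C c m n)).trans
        (lActAux_tmul M N A a m (c • n))).trans
        ((congrArg (fun x => rActAux M N C c x) (lActAux_tmul M N A a m n)).trans
          (rActAux_tmul M N C c (a • m) n)).symm
  exact DFunLike.congr_fun h y

end Comm

section BimodHom

variable (A : Type u) [Ring A] (C : Type u) [Ring C]
variable (X : Type u) [AddCommGroup X] [Module A X] [Module Cᵐᵒᵖ X]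
variable (Y : Type u) [AddCommGroup Y] [Module A Y] [Module Cᵐᵒᵖ Y]

/-- A map of `(A,C)`-bimodules: additive, left `A`-equivariant and right `C`-equivariant. -/
structure IsBimodHom (f : X → Y) : Prop where
  map_add : ∀ x y, f (x + y) = f x + f y
  map_lsmul : ∀ (a : A) (x : X), f (a • x) = a • f x
  map_rsmul : ∀ (c : Cᵐᵒᵖ) (x : X), f (c • x) = c • f x

/-- `X` is (isomorphic to) a direct summand of `Y` as an `(A,C)`-bimodule,
i.e. a retract of `Y`. -/
def IsBimodSummand : Prop :=
  ∃ (i : X → Y) (p : Y → X), IsBimodHom A C X Y i ∧ IsBimodHom A C Y X p ∧ ∀ x, p (i x) = x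

end BimodHom

section Jorder

variable (k : Type u) [Field k]

/-- A finite-dimensional `(A,B)`-bimodule over `k`, whose two induced `k`-actions agree
with the given one. -/
structure BimodData (A B : Type u) [Ring A] [Ring B] [Algebra k A] [Algebra k B] :
    Type (u + 1) where
  X : Type u
  [acg : AddCommGroup X]
  [modk : Module k X]
  [modl : Module A X]
  [modr : Module Bᵐᵒᵖ X]
  [scc : SMulCommClass A Bᵐᵒᵖ X]
  [tl : IsScalarTower k A X]
  [tr : IsScalarTower k Bᵐᵒᵖ X]
  [fd : FiniteDimensional k X]

attribute [instance] BimodData.acg BimodData.modk BimodData.modl BimodData.modr BimodData.scc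
  BimodData.tl BimodData.tr BimodData.fd

variable (A B : Type u) [Ring A] [Ring B] [Algebra k A] [Algebra k B]

/-- `A ≥_J B`: there are finite-dimensional bimodules `M`, `N` such that the regular
`A`-`A`-bimodule `A` is a direct summand of `M ⊗_B N`. -/
def Jge : Prop :=
  ∃ (M : BimodData k A B) (N : BimodData k B A),
    IsBimodSummand A A A (BalTensor B M.X N.X)

/-- `A ≤_J B`. -/
def Jle : Prop := Jge k B A

/-- `A ∼_J B`: two-sided equivalence. -/
def Jequiv : Prop := Jge k A B ∧ Jge k B A

/-- `A >_J B`: strict two-sided inequality. -/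
def Jgt : Prop := Jge k A B ∧ ¬ Jge k B A

end Jorder

/-!
If the regular `B`-bimodule is a retract of `M ⊗_A N`, it is cut out by an element `e` that
commutes with `B` and a bimodule map `p : M ⊗_A N → B` with `p e = 1`. After extending scalars
by `C`, the image of `e` under `m ⊗ n ↦ (m ⊗ 1) ⊗ (n ⊗ 1)` still commutes with `B ⊗ C` (the
elements `1 ⊗ c` pass through the balanced tensor product), and `p` extends to
`(m ⊗ c) ⊗ (n ⊗ c') ↦ p (m ⊗ n) ⊗ c c'`. The statement for `C ⊗ -` follows by transport along
the flips `C ⊗ A ≃ A ⊗ C` and `C ⊗ B ≃ B ⊗ C`, which leave `≥_J` unchanged.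
-/

section BalTensorAPI

variable {B : Type u} [Ring B] {M : Type u} [AddCommGroup M] [Module Bᵐᵒᵖ M]
  {N : Type u} [AddCommGroup N] [Module B N]

lemma BalTensor.induction_on {P : BalTensor B M N → Prop} (x : BalTensor B M N) (zero : P 0)
    (tmul : ∀ m n, P (BalTensor.tmul B M N m n)) (add : ∀ x y, P x → P y → P (x + y)) : P x := by
  obtain ⟨t, rfl⟩ := BalTensor.mk_surjective B M N x
  induction t using TensorProduct.induction_on with
  | zero => simpa using zero
  | tmul m n => exact tmul m n
  | add t₁ t₂ h₁ h₂ => simpa using add _ _ h₁ h₂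

lemma BalTensor.tmul_add (m : M) (n₁ n₂ : N) :
    BalTensor.tmul B M N m (n₁ + n₂) = BalTensor.tmul B M N m n₁ + BalTensor.tmul B M N m n₂ := by
  rw [BalTensor.tmul, TensorProduct.tmul_add, map_add]; rfl

lemma BalTensor.add_tmul (m₁ m₂ : M) (n : N) :
    BalTensor.tmul B M N (m₁ + m₂) n = BalTensor.tmul B M N m₁ n + BalTensor.tmul B M N m₂ n := by
  rw [BalTensor.tmul, TensorProduct.add_tmul, map_add]; rfl

def BalTensor.tmulHom : M →+ N →+ BalTensor B M N :=
  AddMonoidHom.mk' (fun m => AddMonoidHom.mk' (BalTensor.tmul B M N m) (BalTensor.tmul_add m))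
    fun m₁ m₂ => AddMonoidHom.ext (BalTensor.add_tmul m₁ m₂)

def BalTensor.lift {P : Type u} [AddCommGroup P] (f : M →+ N →+ P)
    (hf : ∀ (b : B) m n, f (op b • m) n = f m (b • n)) : BalTensor B M N →+ P :=
  ((balRel B M N).liftQ (TensorProduct.liftAddHom f fun z m n => by simp).toIntLinearMap <| by
    rw [balRel, Submodule.span_le]
    rintro _ ⟨b, m, n, rfl⟩
    simp [hf]).toAddMonoidHom

end BalTensorAPI

lemma IsBimodHom.map_zero {A C X Y : Type u} [Ring A] [Ring C] [AddCommGroup X] [Module A X]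
    [Module Cᵐᵒᵖ X] [AddCommGroup Y] [Module A Y] [Module Cᵐᵒᵖ Y] {f : X → Y}
    (hf : IsBimodHom A C X Y f) : f 0 = 0 := by
  simpa using hf.map_add 0 0

section Retract

variable {A : Type u} [Ring A] {X : Type u} [AddCommGroup X] [Module A X] [Module Aᵐᵒᵖ X]

theorem isBimodSummand_self_iff [SMulCommClass A Aᵐᵒᵖ X] :
    IsBimodSummand A A A X ↔
      ∃ (e : X) (p : X → A), (∀ a : A, a • e = op a • e) ∧ IsBimodHom A A X A p ∧ p e = 1 := by
  constructor
  · rintro ⟨i, p, hi, hp, hpi⟩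
    refine ⟨i 1, p, fun a => ?_, hp, hpi 1⟩
    rw [← hi.map_lsmul, ← hi.map_rsmul, smul_eq_mul, op_smul_eq_mul, mul_one, one_mul]
  · rintro ⟨e, p, he, hp, hpe⟩
    refine ⟨fun a => a • e, p, ⟨fun a b => add_smul a b e, fun a b => mul_smul a b e,
      fun c b => ?_⟩, hp, fun a => by rw [hp.map_lsmul, hpe, smul_eq_mul, mul_one]⟩
    rw [← op_unop c, op_smul_eq_mul, mul_smul, he, smul_comm]

theorem IsBimodSummand.of_ringEquiv {A A' X X' : Type u} [Ring A] [Ring A']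
    [AddCommGroup X] [Module A X] [Module Aᵐᵒᵖ X] [SMulCommClass A Aᵐᵒᵖ X]
    [AddCommGroup X'] [Module A' X'] [Module A'ᵐᵒᵖ X'] [SMulCommClass A' A'ᵐᵒᵖ X']
    (e : A' ≃+* A) (q : X' ≃+ X) (hl : ∀ (a : A') x, q (a • x) = e a • q x)
    (hr : ∀ (a : A') x, q (op a • x) = op (e a) • q x) (h : IsBimodSummand A A A X) :
    IsBimodSummand A' A' A' X' := by
  obtain ⟨e₀, p, he₀, hp, hpe₀⟩ := isBimodSummand_self_iff.1 h
  refine isBimodSummand_self_iff.2 ⟨q.symm e₀, fun x => e.symm (p (q x)), fun a => ?_,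
    ⟨fun x y => ?_, fun a x => ?_, fun c x => ?_⟩, ?_⟩
  · apply q.injective
    rw [hl, hr, AddEquiv.apply_symm_apply, he₀]
  · rw [map_add, hp.map_add, map_add]
  · rw [hl, hp.map_lsmul, smul_eq_mul, map_mul, RingEquiv.symm_apply_apply, smul_eq_mul]
  · obtain ⟨a, rfl⟩ := op_surjective c
    rw [hr, hp.map_rsmul, op_smul_eq_mul, map_mul, RingEquiv.symm_apply_apply, op_smul_eq_mul]
  · change e.symm (p (q (q.symm e₀))) = 1
    rw [AddEquiv.apply_symm_apply, hpe₀, map_one]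

end Retract

section Restrict

variable {k : Type u} [Field k] {A B A' B' : Type u} [Ring A] [Ring B] [Ring A'] [Ring B']
  [Algebra k A] [Algebra k B] [Algebra k A'] [Algebra k B']

-- Reducible, so that instance search sees through `(M.restrict f g).X` to `M.X`.
abbrev BimodData.restrict (f : A' →ₐ[k] A) (g : B' →ₐ[k] B) (M : BimodData k A B) :
    BimodData k A' B' :=
  letI : Module A' M.X := Module.compHom M.X f.toRingHom
  letI : Module B'ᵐᵒᵖ M.X := Module.compHom M.X (AlgHom.op g).toRingHom
  { X := M.X
    scc := ⟨fun a b m => smul_comm (f a) (op (g b.unop)) m⟩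
    tl := ⟨fun x a m => by
      change f (x • a) • m = x • f a • m
      rw [map_smul, smul_assoc]⟩
    tr := ⟨fun x b m => by
      change op (g (x • b.unop)) • m = x • op (g b.unop) • m
      rw [map_smul, op_smul, smul_assoc]⟩ }

lemma balRel_restrict {C C' : Type u} [Ring C] [Ring C'] [Algebra k C] [Algebra k C']
    (f : A' →ₐ[k] A) (g : B' ≃ₐ[k] B) (h : C' →ₐ[k] C) (M : BimodData k A B)
    (N : BimodData k B C) :
    balRel B' (M.restrict f (g : B' →ₐ[k] B)).X (N.restrict (g : B' →ₐ[k] B) h).X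
      = balRel B M.X N.X := by
  apply le_antisymm
  · apply Submodule.span_le.2
    rintro _ ⟨b, m, n, rfl⟩
    exact Submodule.subset_span ⟨g b, m, n, rfl⟩
  · apply Submodule.span_le.2
    rintro _ ⟨b, m, n, rfl⟩
    refine Submodule.subset_span ⟨g.symm b, m, n, ?_⟩
    change _ = (op (g (g.symm b)) • m) ⊗ₜ[ℤ] n - m ⊗ₜ[ℤ] (g (g.symm b) • n)
    rw [AlgEquiv.apply_symm_apply]

theorem Jge.of_algEquiv (eA : A' ≃ₐ[k] A) (eB : B' ≃ₐ[k] B) (h : Jge k A B) : Jge k A' B' := by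
  obtain ⟨M, N, hMN⟩ := h
  let M' := M.restrict (eA : A' →ₐ[k] A) (eB : B' →ₐ[k] B)
  let N' := N.restrict (eB : B' →ₐ[k] B) (eA : A' →ₐ[k] A)
  let q : BalTensor B' M'.X N'.X ≃+ BalTensor B M.X N.X :=
    (Submodule.quotEquivOfEq _ _
      (balRel_restrict (eA : A' →ₐ[k] A) eB (eA : A' →ₐ[k] A) M N)).toAddEquiv
  refine ⟨M', N', hMN.of_ringEquiv eA.toRingEquiv q (fun a x => ?_) (fun a x => ?_)⟩ <;>
  induction x using BalTensor.induction_on with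
  | zero => simp
  | add x y hx hy => simp only [smul_add, map_add, hx, hy]
  | tmul m n => rfl

end Restrict

section RightExt

variable {k : Type u} [Field k] {C : Type u} [Ring C] [Algebra k C]

variable (k C) in
/-- A synonym for `X ⊗[k] C`, so that the actions of `R ⊗[k] C` and `(S ⊗[k] C)ᵐᵒᵖ` defined
below are not instances on every tensor product. -/
def RightExt (X : Type u) [AddCommGroup X] [Module k X] : Type u := X ⊗[k] C

namespace RightExt

variable {X : Type u} [AddCommGroup X] [Module k X]

instance : AddCommGroup (RightExt k C X) := inferInstanceAs (AddCommGroup (X ⊗[k] C))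

instance : Module k (RightExt k C X) := inferInstanceAs (Module k (X ⊗[k] C))

instance [Module.Finite k C] [Module.Finite k X] : Module.Finite k (RightExt k C X) :=
  inferInstanceAs (Module.Finite k (X ⊗[k] C))

def tmul (x : X) (c : C) : RightExt k C X := x ⊗ₜ[k] c

def tmulOneHom : X →+ RightExt k C X := ((TensorProduct.mk k X C).flip 1).toAddMonoidHom

lemma induction_on {P : RightExt k C X → Prop} (y : RightExt k C X) (zero : P 0)
    (tmul : ∀ x c, P (tmul x c)) (add : ∀ y₁ y₂, P y₁ → P y₂ → P (y₁ + y₂)) : P y :=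
  TensorProduct.induction_on y zero tmul add

section Left

variable (R : Type u) [Ring R] [Algebra k R] [Module R X] [IsScalarTower k R X]

def leftAction : R ⊗[k] C →ₐ[k] Module.End k (X ⊗[k] C) :=
  Module.endTensorEndAlgHom.comp
    (Algebra.TensorProduct.map (Algebra.lsmul k k X) (Algebra.lsmul k k C))

instance : Module (R ⊗[k] C) (RightExt k C X) :=
  Module.compHom (X ⊗[k] C) (leftAction (X := X) R).toRingHom

variable {R}

lemma tmul_smul_tmul (r : R) (c : C) (x : X) (c₁ : C) :
    (r ⊗ₜ[k] c) • tmul x c₁ = (tmul (r • x) (c * c₁) : RightExt k C X) := by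
  change leftAction R (r ⊗ₜ[k] c) (x ⊗ₜ[k] c₁) = _
  simp only [leftAction, AlgHom.coe_comp, Function.comp_apply, Algebra.TensorProduct.map_tmul,
    Module.endTensorEndAlgHom_apply, TensorProduct.AlgebraTensorModule.map_tmul, Algebra.lsmul_coe,
    smul_eq_mul]
  rfl

instance : IsScalarTower k (R ⊗[k] C) (RightExt k C X) :=
  ⟨fun x ρ y => by
    change leftAction R (x • ρ) y = x • leftAction R ρ y
    rw [map_smul]
    rfl⟩

end Left

section Right

variable (S : Type u) [Ring S] [Algebra k S] [Module Sᵐᵒᵖ X] [IsScalarTower k Sᵐᵒᵖ X]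

def rightAction : (S ⊗[k] C)ᵐᵒᵖ →ₐ[k] Module.End k (X ⊗[k] C) :=
  (Module.endTensorEndAlgHom.comp (Algebra.TensorProduct.map (Algebra.lsmul k k X)
    (Algebra.lsmul k k C))).comp (Algebra.TensorProduct.opAlgEquiv k k S C).symm.toAlgHom

instance : Module (S ⊗[k] C)ᵐᵒᵖ (RightExt k C X) :=
  Module.compHom (X ⊗[k] C) (rightAction (X := X) S).toRingHom

variable {S}

lemma op_tmul_smul_tmul (s : S) (c : C) (x : X) (c₁ : C) :
    op (s ⊗ₜ[k] c) • tmul x c₁ = (tmul (op s • x) (c₁ * c) : RightExt k C X) := by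
  change rightAction S (op (s ⊗ₜ[k] c)) (x ⊗ₜ[k] c₁) = _
  simp only [rightAction, AlgHom.coe_comp, AlgEquiv.coe_toAlgHom, Function.comp_apply,
    Algebra.TensorProduct.opAlgEquiv_symm_tmul, Algebra.TensorProduct.map_tmul,
    Module.endTensorEndAlgHom_apply, TensorProduct.AlgebraTensorModule.map_tmul, Algebra.lsmul_coe,
    smul_eq_mul_unop, unop_op]
  rfl

instance : IsScalarTower k (S ⊗[k] C)ᵐᵒᵖ (RightExt k C X) :=
  ⟨fun x σ y => by
    change rightAction S (x • σ) y = x • rightAction S σ y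
    rw [map_smul]
    rfl⟩

end Right

instance {R S : Type u} [Ring R] [Algebra k R] [Ring S] [Algebra k S]
    [Module R X] [IsScalarTower k R X] [Module Sᵐᵒᵖ X] [IsScalarTower k Sᵐᵒᵖ X]
    [SMulCommClass R Sᵐᵒᵖ X] : SMulCommClass (R ⊗[k] C) (S ⊗[k] C)ᵐᵒᵖ (RightExt k C X) := by
  refine ⟨fun ρ σ y => ?_⟩
  obtain ⟨σ, rfl⟩ := op_surjective σ
  induction ρ using TensorProduct.induction_on with
  | zero => simp
  | add ρ₁ ρ₂ h₁ h₂ => simp only [add_smul, smul_add, h₁, h₂]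
  | tmul r c =>
    induction σ using TensorProduct.induction_on with
    | zero => simp
    | add σ₁ σ₂ h₁ h₂ => simp only [op_add, add_smul, smul_add, h₁, h₂]
    | tmul s c' =>
      induction y using induction_on with
      | zero => simp
      | add y₁ y₂ h₁ h₂ => simp only [smul_add, h₁, h₂]
      | tmul x c₁ =>
        rw [op_tmul_smul_tmul, tmul_smul_tmul, tmul_smul_tmul, op_tmul_smul_tmul, smul_comm,
          mul_assoc]

end RightExt

variable (C) [FiniteDimensional k C] in
def BimodData.rightExt {R S : Type u} [Ring R] [Ring S] [Algebra k R] [Algebra k S]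
    (M : BimodData k R S) : BimodData k (R ⊗[k] C) (S ⊗[k] C) :=
  ⟨RightExt k C M.X⟩

end RightExt

section TensorRight

variable {k : Type u} [Field k] {A B C : Type u} [Ring A] [Algebra k A] [Ring B] [Algebra k B]
  [Ring C] [Algebra k C] {M : BimodData k B A} {N : BimodData k A B}

variable (k C) in
def toRightExt :
    BalTensor A M.X N.X →+ BalTensor (A ⊗[k] C) (RightExt k C M.X) (RightExt k C N.X) :=
  BalTensor.lift
    ((BalTensor.tmulHom.comp RightExt.tmulOneHom).compl₂ RightExt.tmulOneHom) fun a m n => by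
      have hm := RightExt.op_tmul_smul_tmul (k := k) a (1 : C) m 1
      have hn := RightExt.tmul_smul_tmul (k := k) a (1 : C) n 1
      rw [one_mul] at hm hn
      change BalTensor.tmul _ _ _ (RightExt.tmul (op a • m) 1) (RightExt.tmul n 1)
        = BalTensor.tmul _ _ _ (RightExt.tmul m 1) (RightExt.tmul (a • n) 1)
      rw [← hm, ← hn, BalTensor.balance]

lemma toRightExt_tmul (m : M.X) (n : N.X) :
    toRightExt k C (BalTensor.tmul A M.X N.X m n)
      = BalTensor.tmul _ _ _ (RightExt.tmul m 1) (RightExt.tmul n 1) := rfl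

lemma toRightExt_smul (b : B) (w : BalTensor A M.X N.X) :
    toRightExt k C (b • w) = (b ⊗ₜ[k] (1 : C)) • toRightExt k C w := by
  induction w using BalTensor.induction_on with
  | zero => simp
  | add w₁ w₂ h₁ h₂ => simp only [smul_add, map_add, h₁, h₂]
  | tmul m n =>
    rw [BalTensor.lsmul_tmul, toRightExt_tmul, toRightExt_tmul, BalTensor.lsmul_tmul,
      RightExt.tmul_smul_tmul, one_mul]

lemma toRightExt_op_smul (b : B) (w : BalTensor A M.X N.X) :
    toRightExt k C (op b • w) = op (b ⊗ₜ[k] (1 : C)) • toRightExt k C w := by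
  induction w using BalTensor.induction_on with
  | zero => simp
  | add w₁ w₂ h₁ h₂ => simp only [smul_add, map_add, h₁, h₂]
  | tmul m n =>
    rw [BalTensor.rsmul_tmul, toRightExt_tmul, toRightExt_tmul, BalTensor.rsmul_tmul,
      RightExt.op_tmul_smul_tmul, one_mul]

lemma one_tmul_smul_toRightExt (c : C) (w : BalTensor A M.X N.X) :
    ((1 : B) ⊗ₜ[k] c) • toRightExt k C w = op ((1 : B) ⊗ₜ[k] c) • toRightExt k C w := by
  induction w using BalTensor.induction_on with
  | zero => simp
  | add w₁ w₂ h₁ h₂ => simp only [smul_add, map_add, h₁, h₂]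
  | tmul m n =>
    have h := BalTensor.balance (A ⊗[k] C) (RightExt k C M.X) (RightExt k C N.X)
      ((1 : A) ⊗ₜ[k] c) (RightExt.tmul m 1) (RightExt.tmul n 1)
    rw [RightExt.op_tmul_smul_tmul, RightExt.tmul_smul_tmul] at h
    rw [toRightExt_tmul, BalTensor.lsmul_tmul, BalTensor.rsmul_tmul, RightExt.tmul_smul_tmul,
      RightExt.op_tmul_smul_tmul]
    simpa only [op_one, one_smul, one_mul, mul_one] using h

lemma smul_toRightExt_eq_op_smul {e : BalTensor A M.X N.X} (he : ∀ b : B, b • e = op b • e)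
    (ρ : B ⊗[k] C) : ρ • toRightExt k C e = op ρ • toRightExt k C e := by
  induction ρ using TensorProduct.induction_on with
  | zero => simp
  | add ρ₁ ρ₂ h₁ h₂ => simp only [add_smul, op_add, h₁, h₂]
  | tmul b c =>
    have hbc : b ⊗ₜ[k] c = (b ⊗ₜ[k] (1 : C)) * ((1 : B) ⊗ₜ[k] c) := by
      rw [Algebra.TensorProduct.tmul_mul_tmul, mul_one, one_mul]
    rw [hbc, mul_smul, one_tmul_smul_toRightExt, smul_comm, ← toRightExt_smul, he,
      toRightExt_op_smul, ← mul_smul, ← op_mul]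

section Retraction

variable (p : BalTensor A M.X N.X → B) (hp : IsBimodHom B B (BalTensor A M.X N.X) B p)

def bimodPairing : M.X →ₗ[k] N.X →ₗ[k] B :=
  LinearMap.mk₂ k (fun m n => p (BalTensor.tmul A M.X N.X m n))
    (fun m₁ m₂ n => by rw [BalTensor.add_tmul, hp.map_add])
    (fun x m n => by
      rw [← algebraMap_smul B x m, ← BalTensor.lsmul_tmul, hp.map_lsmul, Algebra.smul_def,
        smul_eq_mul])
    (fun m n₁ n₂ => by rw [BalTensor.tmul_add, hp.map_add])
    (fun x m n => by
      rw [← algebraMap_smul Bᵐᵒᵖ x n, MulOpposite.algebraMap_apply, ← BalTensor.rsmul_tmul,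
        hp.map_rsmul, op_smul_eq_mul, ← Algebra.commutes, Algebra.smul_def])

variable (C)

def rightExtPairing : RightExt k C M.X →ₗ[k] RightExt k C N.X →ₗ[k] B ⊗[k] C :=
  TensorProduct.curry <|
    TensorProduct.map (TensorProduct.lift (bimodPairing p hp)) (LinearMap.mul' k C) ∘ₗ
      (TensorProduct.tensorTensorTensorComm k M.X C N.X C).toLinearMap

variable {C}

lemma rightExtPairing_tmul (m : M.X) (c₁ : C) (n : N.X) (c₂ : C) :
    rightExtPairing C p hp (RightExt.tmul m c₁) (RightExt.tmul n c₂)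
      = p (BalTensor.tmul A M.X N.X m n) ⊗ₜ[k] (c₁ * c₂) := by
  change (TensorProduct.map _ _ ∘ₗ (TensorProduct.tensorTensorTensorComm k M.X C N.X C).toLinearMap)
    ((m ⊗ₜ[k] c₁) ⊗ₜ[k] (n ⊗ₜ[k] c₂)) = _
  simp [bimodPairing]

lemma rightExtPairing_balanced (ρ : A ⊗[k] C) (m' : RightExt k C M.X) (n' : RightExt k C N.X) :
    rightExtPairing C p hp (op ρ • m') n' = rightExtPairing C p hp m' (ρ • n') := by
  induction ρ using TensorProduct.induction_on with
  | zero => simp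
  | add ρ₁ ρ₂ h₁ h₂ => simp only [op_add, add_smul, map_add, LinearMap.add_apply, h₁, h₂]
  | tmul a c =>
    induction m' using RightExt.induction_on with
    | zero => simp
    | add m₁ m₂ h₁ h₂ => simp only [smul_add, map_add, LinearMap.add_apply, h₁, h₂]
    | tmul m c₁ =>
      induction n' using RightExt.induction_on with
      | zero => simp
      | add n₁ n₂ h₁ h₂ => simp only [smul_add, map_add, h₁, h₂]
      | tmul n c₂ =>
        rw [RightExt.op_tmul_smul_tmul, RightExt.tmul_smul_tmul, rightExtPairing_tmul,
          rightExtPairing_tmul, BalTensor.balance, mul_assoc]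

lemma rightExtPairing_smul_left (ρ : B ⊗[k] C) (m' : RightExt k C M.X) (n' : RightExt k C N.X) :
    rightExtPairing C p hp (ρ • m') n' = ρ • rightExtPairing C p hp m' n' := by
  induction ρ using TensorProduct.induction_on with
  | zero => simp
  | add ρ₁ ρ₂ h₁ h₂ => simp only [add_smul, map_add, LinearMap.add_apply, h₁, h₂]
  | tmul b c =>
    induction m' using RightExt.induction_on with
    | zero => simp
    | add m₁ m₂ h₁ h₂ => simp only [smul_add, map_add, LinearMap.add_apply, h₁, h₂]
    | tmul m c₁ =>
      induction n' using RightExt.induction_on with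
      | zero => simp
      | add n₁ n₂ h₁ h₂ => simp only [smul_add, map_add, h₁, h₂]
      | tmul n c₂ =>
        rw [RightExt.tmul_smul_tmul, rightExtPairing_tmul, rightExtPairing_tmul,
          ← BalTensor.lsmul_tmul, hp.map_lsmul, smul_eq_mul, smul_eq_mul,
          Algebra.TensorProduct.tmul_mul_tmul, mul_assoc]

lemma rightExtPairing_op_smul_right (σ : B ⊗[k] C) (m' : RightExt k C M.X)
    (n' : RightExt k C N.X) :
    rightExtPairing C p hp m' (op σ • n') = op σ • rightExtPairing C p hp m' n' := by
  induction σ using TensorProduct.induction_on with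
  | zero => simp
  | add σ₁ σ₂ h₁ h₂ => simp only [op_add, add_smul, map_add, h₁, h₂]
  | tmul b c =>
    induction m' using RightExt.induction_on with
    | zero => simp
    | add m₁ m₂ h₁ h₂ => simp only [smul_add, map_add, LinearMap.add_apply, h₁, h₂]
    | tmul m c₁ =>
      induction n' using RightExt.induction_on with
      | zero => simp
      | add n₁ n₂ h₁ h₂ => simp only [smul_add, map_add, h₁, h₂]
      | tmul n c₂ =>
        rw [RightExt.op_tmul_smul_tmul, rightExtPairing_tmul, rightExtPairing_tmul,
          ← BalTensor.rsmul_tmul, hp.map_rsmul, op_smul_eq_mul, op_smul_eq_mul,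
          Algebra.TensorProduct.tmul_mul_tmul, mul_assoc]

variable (C) in
def rightExtRetraction :
    BalTensor (A ⊗[k] C) (RightExt k C M.X) (RightExt k C N.X) →+ B ⊗[k] C :=
  BalTensor.lift (LinearMap.toAddMonoidHom'.comp (rightExtPairing C p hp).toAddMonoidHom)
    (rightExtPairing_balanced p hp)

lemma isBimodHom_rightExtRetraction :
    IsBimodHom (B ⊗[k] C) (B ⊗[k] C) _ _ (rightExtRetraction C p hp) where
  map_add := map_add _
  map_lsmul ρ w := by
    induction w using BalTensor.induction_on with
    | zero => simp
    | add w₁ w₂ h₁ h₂ => simp only [smul_add, map_add, h₁, h₂]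
    | tmul m' n' =>
      rw [BalTensor.lsmul_tmul]
      exact rightExtPairing_smul_left p hp ρ m' n'
  map_rsmul σ w := by
    obtain ⟨σ, rfl⟩ := op_surjective σ
    induction w using BalTensor.induction_on with
    | zero => simp
    | add w₁ w₂ h₁ h₂ => simp only [smul_add, map_add, h₁, h₂]
    | tmul m' n' =>
      rw [BalTensor.rsmul_tmul]
      exact rightExtPairing_op_smul_right p hp σ m' n'

lemma rightExtRetraction_toRightExt (w : BalTensor A M.X N.X) :
    rightExtRetraction C p hp (toRightExt k C w) = p w ⊗ₜ[k] (1 : C) := by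
  induction w using BalTensor.induction_on with
  | zero => simp [hp.map_zero]
  | add w₁ w₂ h₁ h₂ => simp only [map_add, hp.map_add, TensorProduct.add_tmul, h₁, h₂]
  | tmul m n =>
    rw [toRightExt_tmul]
    exact (rightExtPairing_tmul p hp m 1 n 1).trans (by rw [mul_one])

end Retraction

end TensorRight

theorem Jge.tensor_right {k A B : Type u} [Field k] [Ring A] [Algebra k A] [Ring B] [Algebra k B]
    (C : Type u) [Ring C] [Algebra k C] [FiniteDimensional k C] (h : Jge k B A) :
    Jge k (B ⊗[k] C) (A ⊗[k] C) := by
  obtain ⟨M, N, hMN⟩ := h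
  obtain ⟨e, p, he, hp, hpe⟩ := isBimodSummand_self_iff.1 hMN
  refine ⟨M.rightExt C, N.rightExt C, isBimodSummand_self_iff.2
    ⟨toRightExt k C e, rightExtRetraction C p hp, smul_toRightExt_eq_op_smul he,
      isBimodHom_rightExtRetraction p hp, ?_⟩⟩
  rw [rightExtRetraction_toRightExt, hpe, Algebra.TensorProduct.one_def]

open scoped TensorProduct in
theorem stmt12_general (k A B C : Type u) [Field k]
    [Ring A] [Algebra k A]
    [Ring B] [Algebra k B]
    [Ring C] [Algebra k C] [FiniteDimensional k C]
    (h : Jge k B A) :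
    Jge k (B ⊗[k] C) (A ⊗[k] C) ∧ Jge k (C ⊗[k] B) (C ⊗[k] A) ∧
    (Jequiv k A B → Jequiv k (A ⊗[k] C) (B ⊗[k] C)) :=
  ⟨h.tensor_right C,
    (h.tensor_right C).of_algEquiv (Algebra.TensorProduct.comm k C B)
      (Algebra.TensorProduct.comm k C A),
    fun he => ⟨he.1.tensor_right C, he.2.tensor_right C⟩⟩

open scoped TensorProduct in
/-- If `A ≤_J B` then `A ⊗_k C ≤_J B ⊗_k C` and `C ⊗_k A ≤_J C ⊗_k B`;
in particular `A ∼_J B` implies `A ⊗_k C ∼_J B ⊗_k C`. -/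
theorem stmt12 (k A B C : Type u) [Field k]
    [Ring A] [Algebra k A] [FiniteDimensional k A]
    [Ring B] [Algebra k B] [FiniteDimensional k B]
    [Ring C] [Algebra k C] [FiniteDimensional k C]
    (h : Jge k B A) :
    Jge k (B ⊗[k] C) (A ⊗[k] C) ∧ Jge k (C ⊗[k] B) (C ⊗[k] A) ∧
    (Jequiv k A B → Jequiv k (A ⊗[k] C) (B ⊗[k] C)) :=
  stmt12_general k A B C h

end

end JJ
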